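/- arXiv:2001.11668 — 2 statements merged into one kernel-verified Lean document; each statement's English description precedes it below -/
import Mathlib

section
/- In the SGD process on the spectrahedron with fixed step-size η > 0 (Y_1 = X_1 ∈ S_n; for t ≥ 1: Y_{t+1} = X_t − η∇̂_t and X_{t+1} = Π_{S_n}[Y_{t+1}], where ∇̂_t is a random matrix in 𝕊^n with 𝔼[∇̂_t | ℱ_t] = ∇f(X_t) and ‖∇̂_t‖_F ≤ G a.s., and ℱ_t = σ(X_1, ..., X_t)), for a minimizer X* of the convex differentiable f over S_n and Z_t := ‖Y_t − X*‖_F² − (t−1)η²G², it holds almost surely for every t ≥ 2 that Z_t − 𝔼[Z_t | ℱ_{t−1}] ≤ 4√2·ηG + η²G². -/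
open scoped BigOperators
open MeasureTheory
open scoped Matrix

namespace LRSGD

noncomputable def frobInner {n : ℕ} (A B : Matrix (Fin n) (Fin n) ℝ) : ℝ :=
  Matrix.trace (A * Bᵀ)

noncomputable def frobNorm {n : ℕ} (A : Matrix (Fin n) (Fin n) ℝ) : ℝ :=
  Real.sqrt (∑ i, ∑ j, (A i j) ^ 2)

noncomputable def specNorm {n : ℕ} (A : Matrix (Fin n) (Fin n) ℝ) : ℝ :=
  sSup {s : ℝ | ∃ u : Fin n → ℝ, (∑ k, u k ^ 2) = 1 ∧
    s = Real.sqrt (∑ i, (A.mulVec u i) ^ 2)}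

def spectrahedron (n : ℕ) : Set (Matrix (Fin n) (Fin n) ℝ) :=
  {X | X.PosSemidef ∧ X.trace = 1}

def IsProjOn {n : ℕ} (S : Set (Matrix (Fin n) (Fin n) ℝ))
    (M P : Matrix (Fin n) (Fin n) ℝ) : Prop :=
  P ∈ S ∧ ∀ Z ∈ S, frobNorm (M - P) ≤ frobNorm (M - Z)

def IsEigenDecomp {n : ℕ} (M : Matrix (Fin n) (Fin n) ℝ)
    (lam : Fin n → ℝ) (v : Fin n → Fin n → ℝ) : Prop :=
  Antitone lam ∧
  (∀ i j, (∑ k, v i k * v j k) = if i = j then (1 : ℝ) else 0) ∧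
  M = ∑ i, lam i • Matrix.vecMulVec (v i) (v i)

def IsGradient {n : ℕ} (f : Matrix (Fin n) (Fin n) ℝ → ℝ)
    (g : Matrix (Fin n) (Fin n) ℝ → Matrix (Fin n) (Fin n) ℝ) : Prop :=
  ∀ X H : Matrix (Fin n) (Fin n) ℝ,
    HasDerivAt (fun t : ℝ => f (X + t • H)) (frobInner (g X) H) 0

def IsMinimizerOn {n : ℕ} (f : Matrix (Fin n) (Fin n) ℝ → ℝ)
    (S : Set (Matrix (Fin n) (Fin n) ℝ)) (Xs : Matrix (Fin n) (Fin n) ℝ) : Prop :=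
  Xs ∈ S ∧ ∀ Y ∈ S, f Xs ≤ f Y


/-- σ-algebra generated (entrywise) by a matrix-valued random variable. -/
def entrySigma {n : ℕ} {Ω : Type} (X : Ω → Matrix (Fin n) (Fin n) ℝ) :
    MeasurableSpace Ω :=
  ⨆ i, ⨆ j, MeasurableSpace.comap (fun ω => X ω i j) inferInstance

end LRSGD

open scoped InnerProductSpace

/-!
Write `Z_t = A + B` with `A = ‖X_t - X*‖² - tη²G²`, which is `ℱ_t`-measurable and hence its own
conditional expectation, and `B = ‖Y_{t+1} - X*‖² - ‖X_t - X*‖² = η²‖∇̂_t‖² - 2η⟪∇̂_t, X_t - X*⟫`.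
Since `X_t` and `X*` lie in the spectrahedron, `‖X_t - X*‖ ≤ √2`, so Cauchy–Schwarz confines `B`
to `[-2√2ηG, η²G² + 2√2ηG]`. Hence `Z_t - 𝔼[Z_t | ℱ_t] = B - 𝔼[B | ℱ_t]` is at most the length
of that interval.
-/

namespace Matrix.PosSemidef

variable {ι : Type*} {A B : Matrix ι ι ℝ}

theorem sq_apply_le_mul_apply (hA : A.PosSemidef) (i j : ι) :
    A i j ^ 2 ≤ A i i * A j j := by
  have hdet := (hA.submatrix ![i, j]).det_nonneg
  have hsymm : A j i = A i j := by simpa using hA.isHermitian.apply i j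
  simp only [det_fin_two, submatrix_apply, cons_val_zero, cons_val_one, hsymm] at hdet
  linarith

theorem sum_sq_apply_le_trace_sq [Fintype ι] (hA : A.PosSemidef) :
    ∑ i, ∑ j, A i j ^ 2 ≤ A.trace ^ 2 :=
  calc ∑ i, ∑ j, A i j ^ 2 ≤ ∑ i, ∑ j, A i i * A j j :=
        Finset.sum_le_sum fun i _ => Finset.sum_le_sum fun j _ => hA.sq_apply_le_mul_apply i j
    _ = A.trace ^ 2 := by simp only [trace, diag, sq, Finset.sum_mul_sum]

theorem sum_mul_apply_nonneg [Fintype ι] (hA : A.PosSemidef) (hB : B.PosSemidef) :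
    0 ≤ ∑ i, ∑ j, A i j * B i j := by
  have h := (hA.hadamard hB).dotProduct_mulVec_nonneg 1
  simpa [dotProduct, mulVec, hadamard] using h

end Matrix.PosSemidef

theorem norm_sub_smul_sq_sub_norm_sq_mem_Icc {E : Type*} [NormedAddCommGroup E]
    [InnerProductSpace ℝ E] {a d : E} {R G η : ℝ} (ha : ‖a‖ ≤ R) (hd : ‖d‖ ≤ G) (hη : 0 ≤ η) :
    ‖a - η • d‖ ^ 2 - ‖a‖ ^ 2 ∈ Set.Icc (-(2 * η * (R * G))) (η ^ 2 * G ^ 2 + 2 * η * (R * G)) := by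
  have hexpand : ‖a - η • d‖ ^ 2 - ‖a‖ ^ 2 = η ^ 2 * ‖d‖ ^ 2 - 2 * η * ⟪a, d⟫_ℝ := by
    rw [norm_sub_sq_real, norm_smul, inner_smul_right, Real.norm_of_nonneg hη]
    ring
  have hinner : |⟪a, d⟫_ℝ| ≤ R * G :=
    (abs_real_inner_le_norm a d).trans (mul_le_mul ha hd (norm_nonneg d) ((norm_nonneg a).trans ha))
  have hd2 : ‖d‖ ^ 2 ≤ G ^ 2 := pow_le_pow_left₀ (norm_nonneg d) hd 2
  obtain ⟨hlo, hhi⟩ := abs_le.mp hinner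
  rw [hexpand]
  constructor <;> nlinarith [sq_nonneg η]

namespace MeasureTheory

variable {Ω : Type*} {m m0 : MeasurableSpace Ω} {μ : Measure Ω} [IsFiniteMeasure μ]

theorem integrable_of_ae_mem_Icc {f : Ω → ℝ} {a b : ℝ} (hf : AEStronglyMeasurable f μ)
    (h : ∀ᵐ ω ∂μ, f ω ∈ Set.Icc a b) : Integrable f μ :=
  Integrable.of_bound hf (max |a| |b|) (h.mono fun _ hω => abs_le_max_abs_abs hω.1 hω.2)

theorem ae_sub_condExp_le_of_mem_Icc (hm : m ≤ m0) {F A B : Ω → ℝ} {a b : ℝ}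
    (hA : StronglyMeasurable[m] A) (hAint : Integrable A μ) (hB : AEStronglyMeasurable B μ)
    (hBab : ∀ᵐ ω ∂μ, B ω ∈ Set.Icc a b) (hF : ∀ ω, F ω = A ω + B ω) :
    ∀ᵐ ω ∂μ, F ω - μ[F|m] ω ≤ b - a := by
  have hBint := integrable_of_ae_mem_Icc hB hBab
  have hFAB : F = A + B := funext hF
  have hcondB : ∀ᵐ ω ∂μ, a ≤ μ[B|m] ω := by
    have h := condExp_mono (m := m) (integrable_const a) hBint (hBab.mono fun _ hω => hω.1)
    rwa [condExp_const hm] at h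
  filter_upwards [condExp_add hAint hBint m, hcondB, hBab] with ω hadd ha hb
  rw [hFAB, hadd, Pi.add_apply, Pi.add_apply, condExp_of_stronglyMeasurable hm hA hAint]
  linarith [hb.2]

end MeasureTheory

namespace LRSGD

section Frobenius

variable {n : ℕ}

def frobFlat (A : Matrix (Fin n) (Fin n) ℝ) : EuclideanSpace ℝ (Fin n × Fin n) :=
  WithLp.toLp 2 fun p => A p.1 p.2

theorem frobFlat_sub (A B : Matrix (Fin n) (Fin n) ℝ) :
    frobFlat (A - B) = frobFlat A - frobFlat B := rfl

theorem frobFlat_smul (c : ℝ) (A : Matrix (Fin n) (Fin n) ℝ) :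
    frobFlat (c • A) = c • frobFlat A := rfl

theorem norm_frobFlat_sq (A : Matrix (Fin n) (Fin n) ℝ) :
    ‖frobFlat A‖ ^ 2 = ∑ i, ∑ j, A i j ^ 2 := by
  simp [frobFlat, EuclideanSpace.norm_sq_eq, Fintype.sum_prod_type]

theorem inner_frobFlat (A B : Matrix (Fin n) (Fin n) ℝ) :
    ⟪frobFlat A, frobFlat B⟫_ℝ = ∑ i, ∑ j, A i j * B i j := by
  simp [frobFlat, PiLp.inner_apply, Fintype.sum_prod_type, mul_comm]

theorem frobNorm_eq_norm_frobFlat (A : Matrix (Fin n) (Fin n) ℝ) :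
    frobNorm A = ‖frobFlat A‖ := by
  rw [frobNorm, ← norm_frobFlat_sq, Real.sqrt_sq (norm_nonneg _)]

theorem norm_frobFlat_le_one {U : Matrix (Fin n) (Fin n) ℝ} (hU : U ∈ spectrahedron n) :
    ‖frobFlat U‖ ≤ 1 := by
  have h := hU.1.sum_sq_apply_le_trace_sq
  rw [hU.2, ← norm_frobFlat_sq] at h
  nlinarith [norm_nonneg (frobFlat U)]

theorem frobNorm_sub_sq_le_two {U V : Matrix (Fin n) (Fin n) ℝ}
    (hU : U ∈ spectrahedron n) (hV : V ∈ spectrahedron n) : frobNorm (U - V) ^ 2 ≤ 2 := by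
  have hinner : 0 ≤ ⟪frobFlat U, frobFlat V⟫_ℝ := by
    rw [inner_frobFlat]; exact hU.1.sum_mul_apply_nonneg hV.1
  rw [frobNorm_eq_norm_frobFlat, frobFlat_sub, norm_sub_sq_real]
  nlinarith [norm_frobFlat_le_one hU, norm_frobFlat_le_one hV, norm_nonneg (frobFlat U),
    norm_nonneg (frobFlat V)]

theorem frobNorm_sub_smul_sub_sq_sub_mem_Icc {U V D : Matrix (Fin n) (Fin n) ℝ} {η G : ℝ}
    (hU : U ∈ spectrahedron n) (hV : V ∈ spectrahedron n) (hD : frobNorm D ≤ G) (hη : 0 ≤ η) :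
    frobNorm (U - η • D - V) ^ 2 - frobNorm (U - V) ^ 2 ∈
      Set.Icc (-(2 * η * (Real.sqrt 2 * G))) (η ^ 2 * G ^ 2 + 2 * η * (Real.sqrt 2 * G)) := by
  have hUV := Real.le_sqrt_of_sq_le (frobNorm_sub_sq_le_two hU hV)
  rw [frobNorm_eq_norm_frobFlat] at hUV hD
  rw [sub_right_comm, frobNorm_eq_norm_frobFlat, frobNorm_eq_norm_frobFlat, frobFlat_sub,
    frobFlat_smul]
  exact norm_sub_smul_sq_sub_norm_sq_mem_Icc hUV hD hη

end Frobenius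

theorem mem_of_isProjOn {n : ℕ} {S : Set (Matrix (Fin n) (Fin n) ℝ)}
    {X Y : ℕ → Matrix (Fin n) (Fin n) ℝ} (hX1 : X 1 ∈ S)
    (hXrec : ∀ t, 1 ≤ t → IsProjOn S (Y (t + 1)) (X (t + 1))) : ∀ t, 1 ≤ t → X t ∈ S
  | 1, _ => hX1
  | t + 2, _ => (hXrec (t + 1) (by omega)).1

theorem measurable_entry_of_le_entrySigma {n : ℕ} {Ω : Type} {m : MeasurableSpace Ω}
    {X : Ω → Matrix (Fin n) (Fin n) ℝ} (hm : entrySigma X ≤ m) (i j : Fin n) :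
    Measurable[m] fun ω => X ω i j :=
  Measurable.of_comap_le
    ((le_iSup₂ (f := fun i j => MeasurableSpace.comap (fun ω => X ω i j) _) i j).trans hm)

theorem measurable_frobNorm {n : ℕ} {Ω : Type*} {m : MeasurableSpace Ω}
    {A : Ω → Matrix (Fin n) (Fin n) ℝ} (hA : ∀ i j, Measurable fun ω => A ω i j) :
    Measurable fun ω => frobNorm (A ω) := by
  unfold frobNorm
  exact (Finset.measurable_sum _ fun i _ => Finset.measurable_sum _ fun j _ =>
    (hA i j).pow_const 2).sqrt

theorem stmt16_general (n : ℕ)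
    (f : Matrix (Fin n) (Fin n) ℝ → ℝ)
    (Xstar : Matrix (Fin n) (Fin n) ℝ)
    (hmin : IsMinimizerOn f (spectrahedron n) Xstar)
    (Ω : Type) (m0 : MeasurableSpace Ω) (μ : Measure Ω) [IsProbabilityMeasure μ]
    (η G : ℝ) (hη : 0 < η)
    (X Y D : ℕ → Ω → Matrix (Fin n) (Fin n) ℝ)
    (ℱ : ℕ → MeasurableSpace Ω)
    (hℱ : ∀ t, ℱ t = ⨆ s ∈ Set.Icc 1 t, entrySigma (X s))
    (hℱm : ∀ t, ℱ t ≤ m0)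
    (hDmeas : ∀ t i j, Measurable fun ω => D t ω i j)
    (hX1 : ∀ ω, X 1 ω ∈ spectrahedron n)
    (hYrec : ∀ t, 1 ≤ t → ∀ ω, Y (t + 1) ω = X t ω - η • D t ω)
    (hXrec : ∀ t, 1 ≤ t → ∀ ω, IsProjOn (spectrahedron n) (Y (t + 1) ω) (X (t + 1) ω))
    (hGbound : ∀ t, 1 ≤ t → ∀ᵐ ω ∂μ, frobNorm (D t ω) ≤ G) :
    ∀ t, 1 ≤ t → ∀ᵐ ω ∂μ,
      (frobNorm (Y (t + 1) ω - Xstar) ^ 2 - (t : ℝ) * η ^ 2 * G ^ 2) -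
        (μ[fun ω' => frobNorm (Y (t + 1) ω' - Xstar) ^ 2 - (t : ℝ) * η ^ 2 * G ^ 2
          | ℱ t]) ω ≤
      4 * Real.sqrt 2 * η * G + η ^ 2 * G ^ 2 := by
  intro t ht
  have hXt : ∀ ω, X t ω ∈ spectrahedron n :=
    fun ω => mem_of_isProjOn (X := (X · ω)) (Y := (Y · ω)) (hX1 ω) (fun s hs => hXrec s hs ω) t ht
  have hXℱ : ∀ i j, Measurable[ℱ t] fun ω => X t ω i j :=
    measurable_entry_of_le_entrySigma <| hℱ t ▸
      le_iSup₂ (f := fun s (_ : s ∈ Set.Icc 1 t) => entrySigma (X s)) t ⟨ht, le_rfl⟩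
  have hYmeas : ∀ i j, Measurable fun ω => Y (t + 1) ω i j := fun i j => by
    simp only [hYrec t ht, Matrix.sub_apply, Matrix.smul_apply, smul_eq_mul]
    exact ((hXℱ i j).mono (hℱm t) le_rfl).sub ((hDmeas t i j).const_mul η)
  have hXdist : Measurable[ℱ t] fun ω => frobNorm (X t ω - Xstar) ^ 2 :=
    (measurable_frobNorm fun i j => (hXℱ i j).sub_const (Xstar i j)).pow_const 2
  have hYdist : Measurable fun ω => frobNorm (Y (t + 1) ω - Xstar) ^ 2 :=
    (measurable_frobNorm fun i j => (hYmeas i j).sub_const (Xstar i j)).pow_const 2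
  have hXdist_int : Integrable (fun ω => frobNorm (X t ω - Xstar) ^ 2) μ :=
    integrable_of_ae_mem_Icc (hXdist.mono (hℱm t) le_rfl).aestronglyMeasurable
      (ae_of_all _ fun ω => ⟨sq_nonneg _, frobNorm_sub_sq_le_two (hXt ω) hmin.1⟩)
  have hstep : ∀ᵐ ω ∂μ, frobNorm (Y (t + 1) ω - Xstar) ^ 2 - frobNorm (X t ω - Xstar) ^ 2 ∈
      Set.Icc (-(2 * η * (Real.sqrt 2 * G))) (η ^ 2 * G ^ 2 + 2 * η * (Real.sqrt 2 * G)) := by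
    filter_upwards [hGbound t ht] with ω hD
    rw [hYrec t ht ω]
    exact frobNorm_sub_smul_sub_sq_sub_mem_Icc (hXt ω) hmin.1 hD hη.le
  have key := ae_sub_condExp_le_of_mem_Icc (hℱm t)
    (F := fun ω => frobNorm (Y (t + 1) ω - Xstar) ^ 2 - (t : ℝ) * η ^ 2 * G ^ 2)
    (A := fun ω => frobNorm (X t ω - Xstar) ^ 2 - (t : ℝ) * η ^ 2 * G ^ 2)
    (hXdist.sub_const _).stronglyMeasurable (hXdist_int.sub (integrable_const _))
    (hYdist.sub (hXdist.mono (hℱm t) le_rfl)).aestronglyMeasurable hstep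
    fun _ => by rw [Pi.sub_apply]; ring
  filter_upwards [key] with ω h
  linarith

/-- bounded differences of the submartingale sequence:
Z_t − 𝔼[Z_t | ℱ_{t−1}] ≤ 4√2·ηG + η²G². -/
theorem stmt16 (n : ℕ)
    (f : Matrix (Fin n) (Fin n) ℝ → ℝ)
    (g : Matrix (Fin n) (Fin n) ℝ → Matrix (Fin n) (Fin n) ℝ)
    (hconv : ConvexOn ℝ Set.univ f) (hgrad : IsGradient f g)
    (Xstar : Matrix (Fin n) (Fin n) ℝ)
    (hmin : IsMinimizerOn f (spectrahedron n) Xstar)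
    (Ω : Type) (m0 : MeasurableSpace Ω) (μ : Measure Ω) [IsProbabilityMeasure μ]
    (η G : ℝ) (hη : 0 < η)
    (X Y D : ℕ → Ω → Matrix (Fin n) (Fin n) ℝ)
    (ℱ : ℕ → MeasurableSpace Ω)
    (hℱ : ∀ t, ℱ t = ⨆ s ∈ Set.Icc 1 t, entrySigma (X s))
    (hℱm : ∀ t, ℱ t ≤ m0)
    (hXmeas : ∀ t i j, Measurable fun ω => X t ω i j)
    (hDmeas : ∀ t i j, Measurable fun ω => D t ω i j)
    (hY1 : ∀ ω, Y 1 ω = X 1 ω)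
    (hX1 : ∀ ω, X 1 ω ∈ spectrahedron n)
    (hYrec : ∀ t, 1 ≤ t → ∀ ω, Y (t + 1) ω = X t ω - η • D t ω)
    (hXrec : ∀ t, 1 ≤ t → ∀ ω, IsProjOn (spectrahedron n) (Y (t + 1) ω) (X (t + 1) ω))
    (hunbiased : ∀ t, 1 ≤ t → ∀ i j,
      (μ[fun ω => D t ω i j | ℱ t]) =ᵐ[μ] fun ω => g (X t ω) i j)
    (hGbound : ∀ t, 1 ≤ t → ∀ᵐ ω ∂μ, frobNorm (D t ω) ≤ G) :
    ∀ t, 1 ≤ t → ∀ᵐ ω ∂μ,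
      (frobNorm (Y (t + 1) ω - Xstar) ^ 2 - (t : ℝ) * η ^ 2 * G ^ 2) -
        (μ[fun ω' => frobNorm (Y (t + 1) ω' - Xstar) ^ 2 - (t : ℝ) * η ^ 2 * G ^ 2
          | ℱ t]) ω ≤
      4 * Real.sqrt 2 * η * G + η ^ 2 * G ^ 2 :=
  stmt16_general n f Xstar hmin Ω m0 μ η G hη X Y D ℱ hℱ hℱm hDmeas hX1 hYrec hXrec hGbound

end LRSGD
end

section
/- In the SGD process on the spectrahedron with fixed step-size η > 0 (Y_1 = X_1 ∈ S_n; for t ≥ 1: Y_{t+1} = X_t − η∇̂_t and X_{t+1} = Π_{S_n}[Y_{t+1}], where ∇̂_t is a random matrix in 𝕊^n with 𝔼[∇̂_t | ℱ_t] = ∇f(X_t), ‖∇̂_t‖_F ≤ G a.s., and conditional variance 𝔼[‖∇̂_t − ∇f(X_t)‖_F² | ℱ_t] ≤ σ²/L a.s., with ℱ_t = σ(X_1, ..., X_t)), for a minimizer X* of the convex differentiable f over S_n and Z_t := ‖Y_t − X*‖_F² − (t−1)η²G², the conditional variance satisfies Var(Z_t | ℱ_{t−1}) ≤ 2η⁴G⁴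 + 16η²σ²/L almost surely for every t ≥ 2. -/
/-!
Write `A = X_t - X*` and `D = ∇̂_t`, so that `Z_{t+1} = ‖A - ηD‖² - tη²G²` with `A`
`ℱ_t`-measurable and `‖A‖ ≤ √2`, the Frobenius diameter of the spectrahedron (for `X, Y ∈ S_n`,
`‖X‖² ≤ (tr X)² = 1` and `⟨X, Y⟩ ≥ 0`). A conditional variance is at most the conditional second
moment about any `ℱ_t`-measurable centre; take `c = ‖A‖² - 2η⟨A, 𝔼[D | ℱ_t]⟩ - tη²G²`. Then
`Z_{t+1} - c = -2η⟨A, D - ∇f(X_t)⟩ + η²‖D‖²`, whose square is at most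
`8η²‖A‖²‖D - ∇f(X_t)‖² + 2η⁴‖D‖⁴ ≤ 16η²‖D - ∇f(X_t)‖² + 2η⁴G⁴`, and conditioning on `ℱ_t`
bounds the first term by `16η²σ²/L`.
-/

open scoped BigOperators
open MeasureTheory
open scoped Matrix

namespace LRSGD

open scoped InnerProductSpace

section Frobenius

variable {n : ℕ}

/-- Frobenius geometry on `n × n` matrices is Euclidean geometry on their `n²` entries. -/
def frobVec (A : Matrix (Fin n) (Fin n) ℝ) : EuclideanSpace ℝ (Fin n × Fin n) :=
  WithLp.toLp 2 fun p => A p.1 p.2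

@[simp] lemma frobVec_apply (A : Matrix (Fin n) (Fin n) ℝ) (p : Fin n × Fin n) :
    frobVec A p = A p.1 p.2 := rfl

lemma frobVec_sub (A B : Matrix (Fin n) (Fin n) ℝ) :
    frobVec (A - B) = frobVec A - frobVec B := rfl

lemma frobVec_smul (c : ℝ) (A : Matrix (Fin n) (Fin n) ℝ) :
    frobVec (c • A) = c • frobVec A := rfl

lemma frobNorm_eq_norm_frobVec (A : Matrix (Fin n) (Fin n) ℝ) : frobNorm A = ‖frobVec A‖ := by
  simp [frobNorm, EuclideanSpace.norm_eq, Fintype.sum_prod_type]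

lemma inner_frobVec (A B : Matrix (Fin n) (Fin n) ℝ) :
    ⟪frobVec A, frobVec B⟫_ℝ = ∑ i, ∑ j, A i j * B i j := by
  simp [PiLp.inner_apply, Fintype.sum_prod_type, mul_comm]

lemma measurable_frobVec {Ω : Type*} {m : MeasurableSpace Ω} {M : Ω → Matrix (Fin n) (Fin n) ℝ}
    (hM : ∀ i j, Measurable[m] fun ω => M ω i j) : Measurable[m] fun ω => frobVec (M ω) :=
  (WithLp.measurable_toLp 2 _).comp (measurable_pi_lambda _ fun p => hM p.1 p.2)

lemma condExp_frobVec_ae_eq {Ω : Type*} {m m₀ : MeasurableSpace Ω} {μ : Measure[m₀] Ω}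
    {D Γ : Ω → Matrix (Fin n) (Fin n) ℝ} (hD : Integrable (fun ω => frobVec (D ω)) μ)
    (h : ∀ i j, μ[fun ω => D ω i j | m] =ᵐ[μ] fun ω => Γ ω i j) :
    μ[fun ω => frobVec (D ω) | m] =ᵐ[μ] fun ω => frobVec (Γ ω) := by
  have hcoord : ∀ p, ∀ᵐ ω ∂μ, (μ[fun ω => frobVec (D ω) | m]) ω p = Γ ω p.1 p.2 := fun p => by
    filter_upwards [(EuclideanSpace.proj p).comp_condExp_comm hD, h p.1 p.2] with ω h1 h2
    exact h1.trans h2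
  filter_upwards [ae_all_iff.2 hcoord] with ω hω
  ext p
  exact hω p

end Frobenius

section Spectrahedron

variable {n : ℕ} {X Y : Matrix (Fin n) (Fin n) ℝ}

lemma _root_.Matrix.PosSemidef.apply_sq_le (hX : X.PosSemidef) (i j : Fin n) :
    X i j ^ 2 ≤ X i i * X j j := by
  have hsymm : X j i = X i j := by simpa using hX.1.apply i j
  have hdet := (hX.submatrix ![i, j]).det_nonneg
  rw [Matrix.det_fin_two] at hdet
  simp only [Matrix.submatrix_apply, Matrix.cons_val_zero, Matrix.cons_val_one, hsymm] at hdet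
  linarith [sq (X i j)]

lemma norm_frobVec_sq_le_one (hX : X ∈ spectrahedron n) : ‖frobVec X‖ ^ 2 ≤ 1 := by
  have htrace : ∑ i, X i i = 1 := hX.2
  calc ‖frobVec X‖ ^ 2 = ∑ i, ∑ j, X i j * X i j := by
        rw [← real_inner_self_eq_norm_sq, inner_frobVec]
    _ ≤ ∑ i, ∑ j, X i i * X j j := by
        refine Finset.sum_le_sum fun i _ => Finset.sum_le_sum fun j _ => ?_
        simpa only [sq] using hX.1.apply_sq_le i j
    _ = 1 := by rw [← Finset.sum_mul_sum, htrace, one_mul]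

/-- Schur product theorem: `X ∘ Y` is positive semidefinite, and `⟪X, Y⟫` is the sum of its
entries. -/
lemma inner_frobVec_nonneg (hX : X.PosSemidef) (hY : Y.PosSemidef) :
    0 ≤ ⟪frobVec X, frobVec Y⟫_ℝ := by
  have h := (hX.hadamard hY).dotProduct_mulVec_nonneg (fun _ => 1)
  simpa [inner_frobVec, dotProduct, Matrix.mulVec, Matrix.hadamard] using h

lemma frobNorm_sub_le_sqrt_two (hX : X ∈ spectrahedron n) (hY : Y ∈ spectrahedron n) :
    frobNorm (X - Y) ≤ √2 := by
  rw [frobNorm_eq_norm_frobVec, frobVec_sub]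
  refine Real.le_sqrt_of_sq_le ?_
  rw [norm_sub_sq_real]
  linarith [norm_frobVec_sq_le_one hX, norm_frobVec_sq_le_one hY,
    inner_frobVec_nonneg hX.1 hY.1]

end Spectrahedron

open ProbabilityTheory

section InnerProductSpace

variable {E : Type*} [NormedAddCommGroup E] [InnerProductSpace ℝ E]

lemma sq_norm_sub_smul_sq_sub_le {a d d' : E} {η ρ G : ℝ} (ha : ‖a‖ ≤ ρ) (hd : ‖d‖ ≤ G) :
    (‖a - η • d‖ ^ 2 - (‖a‖ ^ 2 - 2 * η * ⟪a, d'⟫_ℝ)) ^ 2 ≤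
      2 * η ^ 4 * G ^ 4 + 8 * ρ ^ 2 * η ^ 2 * ‖d - d'‖ ^ 2 := by
  have hexpand : ‖a - η • d‖ ^ 2 - (‖a‖ ^ 2 - 2 * η * ⟪a, d'⟫_ℝ) =
      -2 * η * ⟪a, d - d'⟫_ℝ + η ^ 2 * ‖d‖ ^ 2 := by
    rw [norm_sub_sq_real, inner_smul_right, norm_smul, inner_sub_right, mul_pow,
      Real.norm_eq_abs, sq_abs]
    ring
  have hcs : ⟪a, d - d'⟫_ℝ ^ 2 ≤ ρ ^ 2 * ‖d - d'‖ ^ 2 := by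
    rw [← mul_pow, ← sq_abs]
    gcongr
    exact (abs_real_inner_le_norm a _).trans (by gcongr)
  have hd4 : ‖d‖ ^ 4 ≤ G ^ 4 := by gcongr
  rw [hexpand]
  nlinarith [sq_nonneg (2 * η * ⟪a, d - d'⟫_ℝ + η ^ 2 * ‖d‖ ^ 2), sq_nonneg η,
    pow_two_nonneg (η ^ 2)]

end InnerProductSpace

section ConditionalVariance

variable {Ω : Type*} {m m₀ : MeasurableSpace Ω} {μ : Measure[m₀] Ω}

lemma condVar_sub_ae_eq_of_stronglyMeasurable (hm : m ≤ m₀) [SigmaFinite (μ.trim hm)]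
    {Z c : Ω → ℝ} (hcm : StronglyMeasurable[m] c) (hZ : Integrable Z μ) (hc : Integrable c μ) :
    Var[Z - c; μ | m] =ᵐ[μ] Var[Z; μ | m] := by
  refine condExp_congr_ae ?_
  filter_upwards [condExp_sub hZ hc m] with ω hω
  simp [hω, condExp_of_stronglyMeasurable hm hcm hc]

lemma condVar_ae_le_condExp_sq_sub (hm : m ≤ m₀) [IsFiniteMeasure μ] {Z c : Ω → ℝ}
    (hZ : MemLp Z 2 μ) (hc : MemLp c 2 μ) (hcm : StronglyMeasurable[m] c) :
    Var[Z; μ | m] ≤ᵐ[μ] μ[(Z - c) ^ 2 | m] :=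
  (condVar_sub_ae_eq_of_stronglyMeasurable hm hcm (hZ.integrable one_le_two)
    (hc.integrable one_le_two)).symm.trans_le (condVar_ae_le_condExp_sq hm (hZ.sub hc))

variable {E : Type*} [NormedAddCommGroup E] [InnerProductSpace ℝ E] [CompleteSpace E]
  [IsFiniteMeasure μ]

lemma ae_norm_condExp_le (hm : m ≤ m₀) {d : Ω → E} {G : ℝ} (hd : AEStronglyMeasurable d μ)
    (hdG : ∀ᵐ ω ∂μ, ‖d ω‖ ≤ G) : ∀ᵐ ω ∂μ, ‖(μ[d | m]) ω‖ ≤ G := by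
  have hmono := condExp_mono (m := m) (Integrable.of_bound hd G hdG).norm (integrable_const G) hdG
  rw [condExp_const hm] at hmono
  filter_upwards [norm_condExp_le d, hmono] with ω h1 h2
  exact h1.trans h2

theorem condVar_norm_sub_smul_sq_le (hm : m ≤ m₀) {a d γ : Ω → E} {ρ G : ℝ}
    (ha : StronglyMeasurable[m] a) (haρ : ∀ ω, ‖a ω‖ ≤ ρ)
    (hd : AEStronglyMeasurable d μ) (hdG : ∀ᵐ ω ∂μ, ‖d ω‖ ≤ G)
    (hγ : μ[d | m] =ᵐ[μ] γ) (η κ : ℝ) :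
    Var[fun ω => ‖a ω - η • d ω‖ ^ 2 - κ; μ | m] ≤ᵐ[μ]
      fun ω => 2 * η ^ 4 * G ^ 4 + 8 * ρ ^ 2 * η ^ 2 * (μ[fun ω => ‖d ω - γ ω‖ ^ 2 | m]) ω := by
  set Z : Ω → ℝ := fun ω => ‖a ω - η • d ω‖ ^ 2 - κ
  set dbar := μ[d | m]
  have hdbar : ∀ᵐ ω ∂μ, ‖dbar ω‖ ≤ G := ae_norm_condExp_le hm hd hdG
  set c : Ω → ℝ := fun ω => ‖a ω‖ ^ 2 - 2 * η * ⟪a ω, dbar ω⟫_ℝ - κ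
  have hcm : StronglyMeasurable[m] c :=
    ((ha.norm.pow 2).sub ((ha.inner stronglyMeasurable_condExp).const_mul _)).sub
      stronglyMeasurable_const
  have hc : MemLp c 2 μ := by
    refine MemLp.of_bound (hcm.mono hm).aestronglyMeasurable (ρ ^ 2 + 2 * |η| * (ρ * G) + |κ|) ?_
    filter_upwards [hdbar] with ω hω
    have hinner : |⟪a ω, dbar ω⟫_ℝ| ≤ ρ * G :=
      (abs_real_inner_le_norm _ _).trans
        (mul_le_mul (haρ ω) hω (norm_nonneg _) ((norm_nonneg _).trans (haρ ω)))
    have hnorm : ‖a ω‖ ^ 2 ≤ ρ ^ 2 := pow_le_pow_left₀ (norm_nonneg _) (haρ ω) 2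
    have hcross : |2 * η * ⟪a ω, dbar ω⟫_ℝ| ≤ 2 * |η| * (ρ * G) := by
      rw [abs_mul, abs_mul, abs_two]
      gcongr
    rw [Real.norm_eq_abs, abs_le]
    constructor <;> linarith [abs_le.mp hcross, le_abs_self κ, neg_abs_le κ, sq_nonneg ‖a ω‖]
  have hZ : MemLp Z 2 μ := by
    have hmeas : AEStronglyMeasurable Z μ :=
      (((ha.mono hm).aestronglyMeasurable.sub (hd.const_smul η)).norm.pow 2).sub
        aestronglyMeasurable_const
    refine MemLp.of_bound hmeas ((ρ + |η| * G) ^ 2 + |κ|) ?_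
    filter_upwards [hdG] with ω hω
    have hnorm : ‖a ω - η • d ω‖ ≤ ρ + |η| * G :=
      calc ‖a ω - η • d ω‖ ≤ ‖a ω‖ + ‖η • d ω‖ := norm_sub_le _ _
        _ ≤ ρ + |η| * G := by rw [norm_smul, Real.norm_eq_abs]; gcongr; exact haρ ω
    have hsq := pow_le_pow_left₀ (norm_nonneg _) hnorm 2
    rw [Real.norm_eq_abs, abs_le]
    constructor <;> linarith [le_abs_self κ, neg_abs_le κ, sq_nonneg ‖a ω - η • d ω‖]
  have hbound : ∀ᵐ ω ∂μ,
      ((Z - c) ^ 2) ω ≤ 2 * η ^ 4 * G ^ 4 + 8 * ρ ^ 2 * η ^ 2 * ‖d ω - γ ω‖ ^ 2 := by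
    filter_upwards [hdG, hγ] with ω hdω hγω
    simpa [Z, c, hγω] using sq_norm_sub_smul_sq_sub_le (d' := dbar ω) (haρ ω) hdω
  have hN : Integrable (fun ω => ‖d ω - γ ω‖ ^ 2) μ := by
    have hmeas : AEStronglyMeasurable (fun ω => ‖d ω - dbar ω‖ ^ 2) μ :=
      (hd.sub (stronglyMeasurable_condExp.mono hm).aestronglyMeasurable).norm.pow 2
    refine (Integrable.of_bound hmeas ((G + G) ^ 2) ?_).congr ?_
    · filter_upwards [hdG, hdbar] with ω h1 h2
      rw [Real.norm_eq_abs, abs_pow, abs_norm]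
      exact pow_le_pow_left₀ (norm_nonneg _) ((norm_sub_le _ _).trans (add_le_add h1 h2)) 2
    · filter_upwards [hγ] with ω hω
      rw [hω]
  have hsplit := condExp_add (m := m) (integrable_const (2 * η ^ 4 * G ^ 4))
    (hN.const_mul (8 * ρ ^ 2 * η ^ 2))
  filter_upwards [condVar_ae_le_condExp_sq_sub hm hZ hc hcm,
    condExp_mono (m := m) (hZ.sub hc).integrable_sq
      ((integrable_const _).add (hN.const_mul _)) hbound,
    hsplit, condExp_smul (m := m) (μ := μ) (8 * ρ ^ 2 * η ^ 2) (fun ω => ‖d ω - γ ω‖ ^ 2)]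
    with ω h1 h2 h3 h4
  rw [h3, Pi.add_apply, condExp_const hm] at h2
  exact h1.trans (h2.trans_eq (congrArg _ h4))

end ConditionalVariance

section StochasticGradientDescent

variable {n : ℕ} {Ω : Type}

lemma measurable_apply_of_entrySigma_le {m : MeasurableSpace Ω}
    {M : Ω → Matrix (Fin n) (Fin n) ℝ} (h : entrySigma M ≤ m) (i j : Fin n) :
    Measurable[m] fun ω => M ω i j :=
  (comap_measurable _).mono
    ((le_iSup₂ (f := fun i j => MeasurableSpace.comap (fun ω => M ω i j) inferInstance) i j).trans
      h) le_rfl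

lemma mem_spectrahedron_of_isProjOn {X Y : ℕ → Ω → Matrix (Fin n) (Fin n) ℝ}
    (hX1 : ∀ ω, X 1 ω ∈ spectrahedron n)
    (hXrec : ∀ t, 1 ≤ t → ∀ ω, IsProjOn (spectrahedron n) (Y (t + 1) ω) (X (t + 1) ω))
    {t : ℕ} (ht : 1 ≤ t) (ω : Ω) : X t ω ∈ spectrahedron n := by
  obtain ⟨s, rfl⟩ := Nat.exists_eq_add_of_le' ht
  rcases Nat.eq_zero_or_pos s with rfl | hs
  · exact hX1 ω
  · exact (hXrec s hs ω).1

end StochasticGradientDescent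

theorem stmt17_general (n : ℕ)
    (f : Matrix (Fin n) (Fin n) ℝ → ℝ)
    (g : Matrix (Fin n) (Fin n) ℝ → Matrix (Fin n) (Fin n) ℝ)
    (Xstar : Matrix (Fin n) (Fin n) ℝ)
    (hmin : IsMinimizerOn f (spectrahedron n) Xstar)
    (Ω : Type) (m0 : MeasurableSpace Ω) (μ : Measure Ω) [IsProbabilityMeasure μ]
    (η G sig : ℝ) (L : ℕ)
    (X Y D : ℕ → Ω → Matrix (Fin n) (Fin n) ℝ)
    (ℱ : ℕ → MeasurableSpace Ω)
    (hℱ : ∀ t, ℱ t = ⨆ s ∈ Set.Icc 1 t, entrySigma (X s))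
    (hℱm : ∀ t, ℱ t ≤ m0)
    (hDmeas : ∀ t i j, Measurable fun ω => D t ω i j)
    (hX1 : ∀ ω, X 1 ω ∈ spectrahedron n)
    (hYrec : ∀ t, 1 ≤ t → ∀ ω, Y (t + 1) ω = X t ω - η • D t ω)
    (hXrec : ∀ t, 1 ≤ t → ∀ ω, IsProjOn (spectrahedron n) (Y (t + 1) ω) (X (t + 1) ω))
    (hunbiased : ∀ t, 1 ≤ t → ∀ i j,
      (μ[fun ω => D t ω i j | ℱ t]) =ᵐ[μ] fun ω => g (X t ω) i j)
    (hGbound : ∀ t, 1 ≤ t → ∀ᵐ ω ∂μ, frobNorm (D t ω) ≤ G)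
    (hvar : ∀ t, 1 ≤ t → ∀ᵐ ω ∂μ,
      (μ[fun ω' => frobNorm (D t ω' - g (X t ω')) ^ 2 | ℱ t]) ω ≤ sig ^ 2 / L) :
    ∀ t, 1 ≤ t → ∀ᵐ ω ∂μ,
      (μ[fun ω' =>
          ((frobNorm (Y (t + 1) ω' - Xstar) ^ 2 - (t : ℝ) * η ^ 2 * G ^ 2) -
            (μ[fun ω'' => frobNorm (Y (t + 1) ω'' - Xstar) ^ 2 -
                (t : ℝ) * η ^ 2 * G ^ 2 | ℱ t]) ω') ^ 2
        | ℱ t]) ω ≤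
      2 * η ^ 4 * G ^ 4 + 16 * η ^ 2 * sig ^ 2 / L := by
  intro t ht
  have hXt : ∀ i j, Measurable[ℱ t] fun ω => X t ω i j :=
    measurable_apply_of_entrySigma_le <| (hℱ t).symm ▸
      le_biSup (fun s => entrySigma (X s)) (⟨ht, le_rfl⟩ : t ∈ Set.Icc 1 t)
  have ha : StronglyMeasurable[ℱ t] fun ω => frobVec (X t ω - Xstar) :=
    (measurable_frobVec fun i j => (hXt i j).sub measurable_const).stronglyMeasurable
  have haρ : ∀ ω, ‖frobVec (X t ω - Xstar)‖ ≤ √2 := fun ω => by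
    rw [← frobNorm_eq_norm_frobVec]
    exact frobNorm_sub_le_sqrt_two (mem_spectrahedron_of_isProjOn hX1 hXrec ht ω) hmin.1
  have hd : AEStronglyMeasurable (fun ω => frobVec (D t ω)) μ :=
    (measurable_frobVec (hDmeas t)).aestronglyMeasurable
  have hdG : ∀ᵐ ω ∂μ, ‖frobVec (D t ω)‖ ≤ G := by
    simpa only [frobNorm_eq_norm_frobVec] using hGbound t ht
  have hγ := condExp_frobVec_ae_eq (Integrable.of_bound hd G hdG) (hunbiased t ht)
  have hY : ∀ ω, frobNorm (Y (t + 1) ω - Xstar) =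
      ‖frobVec (X t ω - Xstar) - η • frobVec (D t ω)‖ := by
    intro ω
    rw [hYrec t ht ω, frobNorm_eq_norm_frobVec, ← frobVec_smul, ← frobVec_sub, sub_right_comm]
  filter_upwards [condVar_norm_sub_smul_sq_le (hℱm t) ha haρ hd hdG hγ η (t * η ^ 2 * G ^ 2),
    hvar t ht] with ω hω hvarω
  simp only [frobNorm_eq_norm_frobVec, frobVec_sub] at hvarω
  simp only [hY]
  refine hω.trans ?_
  rw [Real.sq_sqrt zero_le_two, mul_div_assoc]
  nlinarith [sq_nonneg η]

/-- conditional variance bound Var(Z_{t+1} | ℱ_t) ≤ 2η⁴G⁴ + 16η²σ²/L. -/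
theorem stmt17 (n : ℕ)
    (f : Matrix (Fin n) (Fin n) ℝ → ℝ)
    (g : Matrix (Fin n) (Fin n) ℝ → Matrix (Fin n) (Fin n) ℝ)
    (hconv : ConvexOn ℝ Set.univ f) (hgrad : IsGradient f g)
    (Xstar : Matrix (Fin n) (Fin n) ℝ)
    (hmin : IsMinimizerOn f (spectrahedron n) Xstar)
    (Ω : Type) (m0 : MeasurableSpace Ω) (μ : Measure Ω) [IsProbabilityMeasure μ]
    (η G sig : ℝ) (hη : 0 < η) (L : ℕ) (hL : 1 ≤ L)
    (X Y D : ℕ → Ω → Matrix (Fin n) (Fin n) ℝ)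
    (ℱ : ℕ → MeasurableSpace Ω)
    (hℱ : ∀ t, ℱ t = ⨆ s ∈ Set.Icc 1 t, entrySigma (X s))
    (hℱm : ∀ t, ℱ t ≤ m0)
    (hXmeas : ∀ t i j, Measurable fun ω => X t ω i j)
    (hDmeas : ∀ t i j, Measurable fun ω => D t ω i j)
    (hY1 : ∀ ω, Y 1 ω = X 1 ω)
    (hX1 : ∀ ω, X 1 ω ∈ spectrahedron n)
    (hYrec : ∀ t, 1 ≤ t → ∀ ω, Y (t + 1) ω = X t ω - η • D t ω)
    (hXrec : ∀ t, 1 ≤ t → ∀ ω, IsProjOn (spectrahedron n) (Y (t + 1) ω) (X (t + 1) ω))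
    (hunbiased : ∀ t, 1 ≤ t → ∀ i j,
      (μ[fun ω => D t ω i j | ℱ t]) =ᵐ[μ] fun ω => g (X t ω) i j)
    (hGbound : ∀ t, 1 ≤ t → ∀ᵐ ω ∂μ, frobNorm (D t ω) ≤ G)
    (hvar : ∀ t, 1 ≤ t → ∀ᵐ ω ∂μ,
      (μ[fun ω' => frobNorm (D t ω' - g (X t ω')) ^ 2 | ℱ t]) ω ≤ sig ^ 2 / L) :
    ∀ t, 1 ≤ t → ∀ᵐ ω ∂μ,
      (μ[fun ω' =>
          ((frobNorm (Y (t + 1) ω' - Xstar) ^ 2 - (t : ℝ) * η ^ 2 * G ^ 2) -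
            (μ[fun ω'' => frobNorm (Y (t + 1) ω'' - Xstar) ^ 2 -
                (t : ℝ) * η ^ 2 * G ^ 2 | ℱ t]) ω') ^ 2
        | ℱ t]) ω ≤
      2 * η ^ 4 * G ^ 4 + 16 * η ^ 2 * sig ^ 2 / L :=
  stmt17_general n f g Xstar hmin Ω m0 μ η G sig L X Y D ℱ hℱ hℱm hDmeas hX1 hYrec hXrec hunbiased
    hGbound hvar

end LRSGD
end
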